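/- If the polynomials $t^i + t^j - 2t + 1$ with $3 \le i \le j$ both odd are required to be positive on all of $(0,1)$, then $(i,j) \in \{(3,3),(3,5),(3,7)\}$. -/

import Mathlib

/-! At `t = 7/10` we have `2t - 1 = 2/5`, while `2 (7/10)^5 < 2/5` and `(7/10)^3 + (7/10)^9 < 2/5`.
Since `t^i + t^j` decreases in `i` and `j` for `t ∈ [0, 1]`, the polynomial is nonpositive at `7/10`
as soon as `i, j ≥ 5` or `j ≥ 9`; the odd pairs `3 ≤ i ≤ j` escaping both cases are
`(3, 3)`, `(3, 5)`, `(3, 7)`. -/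

lemma pow_add_pow_le_pow_add_pow {t : ℝ} (h0 : 0 ≤ t) (h1 : t ≤ 1) {m n i j : ℕ}
    (hm : m ≤ i) (hn : n ≤ j) : t ^ i + t ^ j ≤ t ^ m + t ^ n :=
  add_le_add (pow_le_pow_of_le_one h0 h1 hm) (pow_le_pow_of_le_one h0 h1 hn)

lemma not_pos_of_not_pos_of_le {t : ℝ} (h0 : 0 ≤ t) (h1 : t ≤ 1) {m n i j : ℕ}
    (hmn : t ^ m + t ^ n - 2 * t + 1 ≤ 0) (hm : m ≤ i) (hn : n ≤ j) :
    ¬ 0 < t ^ i + t ^ j - 2 * t + 1 := by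
  have := pow_add_pow_le_pow_add_pow h0 h1 hm hn
  linarith

lemma odd_pair_cases {i j : ℕ} (hi : 3 ≤ i) (hij : i ≤ j) (hoi : Odd i) (hoj : Odd j) :
    (i, j) = (3, 3) ∨ (i, j) = (3, 5) ∨ (i, j) = (3, 7) ∨ (5 ≤ i ∧ 5 ≤ j) ∨ 9 ≤ j := by
  obtain ⟨a, rfl⟩ := hoi
  obtain ⟨b, rfl⟩ := hoj
  simp only [Prod.mk.injEq]
  omega

theorem zassenhaus_type_classification (i j : ℕ) (hi : 3 ≤ i) (hij : i ≤ j)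
    (hoi : Odd i) (hoj : Odd j)
    (h : ∀ t ∈ Set.Ioo (0 : ℝ) 1, 0 < t ^ i + t ^ j - 2 * t + 1) :
    (i, j) = (3, 3) ∨ (i, j) = (3, 5) ∨ (i, j) = (3, 7) := by
  have hpos := h (7 / 10) (by norm_num)
  have h0 : (0 : ℝ) ≤ 7 / 10 := by norm_num
  have h1 : (7 / 10 : ℝ) ≤ 1 := by norm_num
  rcases odd_pair_cases hi hij hoi hoj with h33 | h35 | h37 | ⟨hi5, hj5⟩ | hj9
  · exact Or.inl h33
  · exact Or.inr (Or.inl h35)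
  · exact Or.inr (Or.inr h37)
  · exact absurd hpos (not_pos_of_not_pos_of_le h0 h1 (by norm_num) hi5 hj5)
  · exact absurd hpos (not_pos_of_not_pos_of_le h0 h1 (by norm_num) hi hj9)
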